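/- arXiv:1712.01544 — 6 statements merged into one kernel-verified Lean document; each statement's English description precedes it below -/
import Mathlib

section
/- If F is an undirected Fitch graph, then F does not contain the disjoint union K_1 ∪ K_2 as an induced subgraph; equivalently, for any three pairwise distinct vertices x, y, z of F, if x and y are adjacent in F, then z is adjacent to x or z is adjacent to y. -/
open SimpleGraph

/-- A leaf of a graph is a vertex with exactly one neighbour (i.e. a vertex of degree 1). -/
def SimpleGraph.IsLeaf {V : Type*} (T : SimpleGraph V) (v : V) : Prop :=
  ∃! u, T.Adj v u

/-- The undirected Fitch graph explained by an edge-labelled tree `(T, lam)`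
(labels: `true` = 1, `false` = 0): its vertices are the leaves of `T`, and two
distinct leaves are adjacent iff the (unique) path between them in `T` contains
at least one edge labelled `1`. -/
def fitchGraph {V : Type*} (T : SimpleGraph V) (lam : Sym2 V → Bool) :
    SimpleGraph {v : V // T.IsLeaf v} where
  Adj x y := x ≠ y ∧ ∃ p : T.Walk x.1 y.1, p.IsPath ∧ ∃ e ∈ p.edges, lam e = true
  symm := by
    constructor
    rintro x y ⟨hxy, p, hp, e, he, hl⟩
    exact ⟨hxy.symm, p.reverse, hp.reverse, e, by
      rw [SimpleGraph.Walk.edges_reverse]; exact List.mem_reverse.mpr he, hl⟩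
  loopless := by constructor; rintro x ⟨hx, -⟩; exact hx rfl

/-- A graph is an undirected Fitch graph if it is isomorphic to the Fitch graph
explained by some edge-labelled finite tree. -/
def IsFitchGraph {W : Type*} (G : SimpleGraph W) : Prop :=
  ∃ (V : Type) (T : SimpleGraph V) (lam : Sym2 V → Bool),
    Finite V ∧ T.IsTree ∧ Nonempty (G ≃g fitchGraph T lam)

/-
In a tree the path from `x` to `y` is contained in every walk from `x` to `y`, in particular in
the walk through a third leaf `z`. So a `1`-labelled edge on the path from `x` to `y` lies on the
path from `z` to `x` or on the path from `z` to `y`.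
-/

namespace SimpleGraph

variable {V : Type*} {T : SimpleGraph V}

theorem IsAcyclic.edges_subset_of_isPath (hT : T.IsAcyclic) {x y : V} {p : T.Walk x y}
    (hp : p.IsPath) (w : T.Walk x y) : p.edges ⊆ w.edges := by
  classical
  have hbypass : w.bypass = p :=
    congrArg Subtype.val ((hT.subsingleton_path x y).elim ⟨w.bypass, w.bypass_isPath⟩ ⟨p, hp⟩)
  exact hbypass ▸ w.edges_bypass_subset_edges

theorem IsTree.mem_edges_or_mem_edges_of_isPath (hT : T.IsTree) {x y z : V} {p : T.Walk x y}
    (hp : p.IsPath) {e : Sym2 V} (he : e ∈ p.edges) (q : T.Walk z x) (r : T.Walk z y) :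
    e ∈ q.edges ∨ e ∈ r.edges := by
  have he' := hT.isAcyclic.edges_subset_of_isPath hp (q.reverse.append r) he
  simpa [Walk.edges_append, Walk.edges_reverse] using he'

end SimpleGraph

theorem fitchGraph_adj_or_adj_of_adj {V : Type*} {T : SimpleGraph V} (hT : T.IsTree)
    (lam : Sym2 V → Bool) {x y z : {v : V // T.IsLeaf v}} (hxy : (fitchGraph T lam).Adj x y)
    (hzx : z ≠ x) (hzy : z ≠ y) : (fitchGraph T lam).Adj z x ∨ (fitchGraph T lam).Adj z y := by
  obtain ⟨-, p, hp, e, he, hlabel⟩ := hxy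
  obtain ⟨q, hq, -⟩ := hT.existsUnique_path z.1 x.1
  obtain ⟨r, hr, -⟩ := hT.existsUnique_path z.1 y.1
  rcases hT.mem_edges_or_mem_edges_of_isPath hp he q r with heq | her
  · exact Or.inl ⟨hzx, q, hq, e, heq, hlabel⟩
  · exact Or.inr ⟨hzy, r, hr, e, her, hlabel⟩

/-- an undirected Fitch graph contains no induced `K₁ ∪ K₂`:
for any three pairwise distinct vertices `x, y, z`, if `x` and `y` are adjacent,
then `z` is adjacent to `x` or to `y`. -/
theorem fitch_no_induced_K1_union_K2 {W : Type*} (G : SimpleGraph W)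
    (hG : IsFitchGraph G) :
    ∀ x y z : W, x ≠ y → x ≠ z → y ≠ z → G.Adj x y → G.Adj z x ∨ G.Adj z y := by
  obtain ⟨V, T, lam, -, hT, ⟨f⟩⟩ := hG
  intro x y z _ hxz hyz hxy
  have hfzx : f z ≠ f x := fun h => hxz (f.injective h).symm
  have hfzy : f z ≠ f y := fun h => hyz (f.injective h).symm
  simpa only [f.map_adj_iff] using
    fitchGraph_adj_or_adj_of_adj hT lam (f.map_adj_iff.mpr hxy) hfzx hfzy
end

section
/- Every undirected Fitch graph is a complete multipartite graph. -/
open SimpleGraph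

/-- A graph is complete multipartite if its vertex set can be partitioned into
nonempty independent parts such that two vertices are adjacent iff they lie in
different parts. -/
def IsCompleteMultipartite' {W : Type*} (G : SimpleGraph W) : Prop :=
  ∃ P : Set (Set W), (∀ p ∈ P, p.Nonempty) ∧ (∀ x : W, ∃! p, p ∈ P ∧ x ∈ p) ∧
    ∀ x y : W, G.Adj x y ↔ ∃ p ∈ P, ∃ q ∈ P, p ≠ q ∧ x ∈ p ∧ y ∈ q

/-! Non-adjacency in a Fitch graph is transitive: the tree path from `x` to `z` runs inside the
walk `x → y → z`, so an edge labelled `1` on it already lies on the path `x → y` or `y → z`.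
Transitivity of non-adjacency is Mathlib's `SimpleGraph.IsCompleteMultipartite`, and the
classes of the resulting equivalence relation are the parts. -/

theorem Setoid.not_rel_iff_exists_classes {α : Type*} (r : Setoid α) {x y : α} :
    ¬ r x y ↔ ∃ p ∈ r.classes, ∃ q ∈ r.classes, p ≠ q ∧ x ∈ p ∧ y ∈ q := by
  constructor
  · intro hxy
    refine ⟨{z | r z x}, r.mem_classes x, {z | r z y}, r.mem_classes y, fun h => hxy ?_,
      r.refl x, r.refl y⟩
    exact (Set.ext_iff.mp h x).mp (r.refl x)
  · rintro ⟨p, hp, q, hq, hpq, hx, hy⟩ hxy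
    obtain ⟨c, hc, hxc, hyc⟩ := (r.rel_iff_exists_classes).mp hxy
    exact hpq ((Setoid.eq_of_mem_classes hp hx hc hxc).trans
      (Setoid.eq_of_mem_classes hq hy hc hyc).symm)

theorem SimpleGraph.IsCompleteMultipartite.isCompleteMultipartite' {W : Type*}
    {G : SimpleGraph W} (h : G.IsCompleteMultipartite) : IsCompleteMultipartite' G := by
  refine ⟨h.setoid.classes,
    fun _ => Setoid.nonempty_of_mem_partition h.setoid.isPartition_classes,
    Setoid.classes_eqv_classes, fun x y => ?_⟩
  rw [← Setoid.not_rel_iff_exists_classes]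
  exact not_not.symm

theorem SimpleGraph.IsAcyclic.edges_subset_of_isPath_s1 {V : Type*} {T : SimpleGraph V}
    (hT : T.IsAcyclic) {u v : V} {p : T.Walk u v} (hp : p.IsPath) (w : T.Walk u v) :
    p.edges ⊆ w.edges := by
  classical
  have : p = w.bypass :=
    Subtype.mk.inj <| hT.subsingleton_path u v |>.elim ⟨p, hp⟩ ⟨_, w.bypass_isPath⟩
  exact this ▸ w.edges_bypass_subset_edges

theorem fitchGraph_isCompleteMultipartite {V : Type*} {T : SimpleGraph V} (hT : T.IsTree)
    (lam : Sym2 V → Bool) : (fitchGraph T lam).IsCompleteMultipartite := by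
  refine ⟨fun x y z hxy hyz ⟨hxz, p, hp, e, he, hl⟩ => ?_⟩
  obtain rfl | hxy' := eq_or_ne x y
  · exact hyz ⟨hxz, p, hp, e, he, hl⟩
  obtain rfl | hyz' := eq_or_ne y z
  · exact hxy ⟨hxz, p, hp, e, he, hl⟩
  obtain ⟨q, hq, -⟩ := hT.existsUnique_path x.1 y.1
  obtain ⟨r, hr, -⟩ := hT.existsUnique_path y.1 z.1
  have he' := hT.isAcyclic.edges_subset_of_isPath_s1 hp (q.append r) he
  rw [Walk.edges_append, List.mem_append] at he'
  rcases he' with heq | her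
  · exact hxy ⟨hxy', q, hq, e, heq, hl⟩
  · exact hyz ⟨hyz', r, hr, e, her, hl⟩

/-- every undirected Fitch graph is a complete multipartite graph. -/
theorem fitch_isCompleteMultipartite {W : Type*} (G : SimpleGraph W)
    (hG : IsFitchGraph G) : IsCompleteMultipartite' G := by
  obtain ⟨V, T, lam, -, hT, ⟨f⟩⟩ := hG
  exact ((fitchGraph_isCompleteMultipartite hT lam).comap f.toEmbedding).isCompleteMultipartite'
end

section
/- Suppressing a degree-2 vertex does not change the Fitch graph: let (T, λ) be an edge-labeled tree and let v be a vertex of T of degree exactly 2 with neighbors a and b. Let T' be the tree on the vertex set of T minus v obtained by deleting v and its two incident edges e' = {v,a} and e'' = {v,b} and adding the edge e = {a,b}, and let λ' agree with λ on all edges of T' other than e, with λ'(e) = 0 if λ(e') = λ(e'') = 0 and λ'(e) = 1 otherwise. Then T' is a tree with the same leaves as T, and the undirected Fitch graph explained by (T', λ') equals the undirected Fitch graph explained by (T, λ). -/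
open SimpleGraph

/-!
Every walk in `T'` lifts to a walk in `T` by replacing the new edge `ab` with `a - v - b`. The
lift sends paths to paths (a path uses `ab` at most once, so it meets `v` at most once), it is
injective, and it uses a `1`-labelled edge exactly when the original walk does, because
`λ'(ab) = λ(va) ∨ λ(vb)`. Uniqueness of paths in `T` therefore transfers to `T'`, and the path
between two leaves in `T` is the lift of the path between them in `T'`. Contracting `va` turns
walks in `T` into walks in `T'`, so `T'` is connected; and `a` (resp. `b`) trades its neighbour
`v` for `b` (resp. `a`), so leaves are preserved.
-/

namespace SimpleGraph

variable {V : Type*} {G : SimpleGraph V}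

lemma isLeaf_iff_forall_adj_eq {u w : V} (h : G.Adj u w) :
    G.IsLeaf u ↔ ∀ z, G.Adj u z → z = w :=
  ⟨fun ⟨_, _, hy⟩ z hz => (hy z hz).trans (hy w h).symm, fun H => ⟨w, h, H⟩⟩

lemma IsAcyclic.not_adj_of_adj_of_adj (hG : G.IsAcyclic) {v a b : V}
    (hva : G.Adj v a) (hvb : G.Adj v b) : ¬G.Adj a b := by
  classical
  intro hab
  exact hG.cliqueFree le_rfl {v, a, b} (is3Clique_triple_iff.2 ⟨hva, hvb, hab⟩)

end SimpleGraph

structure IsSuppression {V : Type*} (T : SimpleGraph V) (v a b : V)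
    (T' : SimpleGraph {u : V // u ≠ v}) : Prop where
  adj_iff : ∀ x y : {u : V // u ≠ v},
    T'.Adj x y ↔ (T.Adj x.1 y.1 ∨ (x.1 = a ∧ y.1 = b) ∨ (x.1 = b ∧ y.1 = a))
  adj_left : T.Adj v a
  adj_right : T.Adj v b

namespace IsSuppression

variable {V : Type*} {T : SimpleGraph V} {v a b : V} {T' : SimpleGraph {u : V // u ≠ v}}
  (hS : IsSuppression T v a b T')
include hS

lemma symm : IsSuppression T v b a T' :=
  ⟨fun x y => (hS.adj_iff x y).trans (by tauto), hS.adj_right, hS.adj_left⟩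

lemma ne : a ≠ b := by
  rintro rfl
  exact T'.irrefl ((hS.adj_iff ⟨a, hS.adj_left.ne'⟩ _).2 (Or.inr (Or.inl ⟨rfl, rfl⟩)))

lemma adj_center {x y : {u : V // u ≠ v}} (h : T'.Adj x y) (hxy : ¬T.Adj x.1 y.1) :
    T.Adj x.1 v ∧ T.Adj v y.1 := by
  rcases ((hS.adj_iff x y).1 h).resolve_left hxy with ⟨hx, hy⟩ | ⟨hx, hy⟩ <;> rw [hx, hy]
  exacts [⟨hS.adj_left.symm, hS.adj_right⟩, ⟨hS.adj_right.symm, hS.adj_left⟩]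

omit hS in
def newEdge (hS : IsSuppression T v a b T') : Sym2 {u : V // u ≠ v} :=
  s(⟨a, hS.adj_left.ne'⟩, ⟨b, hS.adj_right.ne'⟩)

lemma eq_newEdge {x y : {u : V // u ≠ v}} (h : T'.Adj x y) (hxy : ¬T.Adj x.1 y.1) :
    s(x, y) = hS.newEdge := by
  rcases ((hS.adj_iff x y).1 h).resolve_left hxy with ⟨hx, hy⟩ | ⟨hx, hy⟩ <;>
    simp [newEdge, Subtype.ext_iff, hx, hy]

omit hS in
open Classical in
/-- The walk in `T` obtained by replacing every use of the new edge `ab` by `a - v - b`. -/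
noncomputable def lift (hS : IsSuppression T v a b T') :
    ∀ {x y : {u : V // u ≠ v}}, T'.Walk x y → T.Walk x.1 y.1
  | _, _, .nil => .nil
  | x, _, @Walk.cons _ _ _ w _ h q =>
    if hxw : T.Adj x.1 w.1 then .cons hxw (hS.lift q)
    else .cons (hS.adj_center h hxw).1 (.cons (hS.adj_center h hxw).2 (hS.lift q))

lemma support_lift_filter [DecidableEq V] {x y : {u : V // u ≠ v}} (p : T'.Walk x y) :
    (hS.lift p).support.filter (· ≠ v) = p.support.map Subtype.val := by
  induction p with
  | @nil x => simp [lift, x.2]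
  | @cons x w y h q ih =>
    rw [lift]
    split_ifs <;> simp_all [x.2]

lemma lift_injective {x y : {u : V // u ≠ v}} :
    Function.Injective (hS.lift : T'.Walk x y → T.Walk x.1 y.1) := by
  classical
  intro p q h
  apply Walk.ext_support
  apply (List.map_injective_iff.2 Subtype.val_injective)
  rw [← hS.support_lift_filter, h, hS.support_lift_filter]

lemma mem_support_of_mem_support_lift {x y z : {u : V // u ≠ v}} {p : T'.Walk x y}
    (hz : z.1 ∈ (hS.lift p).support) : z ∈ p.support := by
  classical
  have : z.1 ∈ (hS.lift p).support.filter (· ≠ v) := List.mem_filter.2 ⟨hz, by simpa using z.2⟩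
  rw [hS.support_lift_filter] at this
  exact (List.mem_map_of_injective Subtype.val_injective).1 this

lemma newEdge_mem_edges_of_mem_support_lift {x y : {u : V // u ≠ v}} {p : T'.Walk x y}
    (hv : v ∈ (hS.lift p).support) : hS.newEdge ∈ p.edges := by
  induction p with
  | @nil x => exact absurd (by simpa [lift] using hv : v = x.1).symm x.2
  | @cons x w y h q ih =>
    rw [lift] at hv
    split_ifs at hv with hxw
    · simp only [Walk.support_cons, List.mem_cons] at hv
      exact List.mem_cons_of_mem _ (ih (hv.resolve_left fun hxv => x.2 hxv.symm))
    · simp [hS.eq_newEdge h hxw]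

lemma isPath_lift {x y : {u : V // u ≠ v}} {p : T'.Walk x y} (hp : p.IsPath) :
    (hS.lift p).IsPath := by
  induction p with
  | nil => simp [lift]
  | @cons x w y h q ih =>
    rw [Walk.cons_isPath_iff] at hp
    have hx : x.1 ∉ (hS.lift q).support := fun hx => hp.2 (hS.mem_support_of_mem_support_lift hx)
    rw [lift]
    split_ifs with hxw
    · exact (Walk.cons_isPath_iff _ _).2 ⟨ih hp.1, hx⟩
    · have hv : v ∉ (hS.lift q).support := fun hv => by
        have := hS.newEdge_mem_edges_of_mem_support_lift hv
        rw [← hS.eq_newEdge h hxw] at this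
        exact hp.2 (Walk.fst_mem_support_of_mem_edges q this)
      simp [Walk.cons_isPath_iff, ih hp.1, hx, hv, x.2]

section Labels

variable {lam : Sym2 V → Bool} {lam' : Sym2 {u : V // u ≠ v} → Bool}
  (hlam₁ : ∀ x y : {u : V // u ≠ v}, T.Adj x.1 y.1 → lam' s(x, y) = lam s(x.1, y.1))
  (hlam₂ : ∀ (ha : a ≠ v) (hb : b ≠ v),
    lam' s(⟨a, ha⟩, ⟨b, hb⟩) = (lam s(v, a) || lam s(v, b)))

include hlam₂ in
lemma label_of_not_adj {x y : {u : V // u ≠ v}} (h : T'.Adj x y) (hxy : ¬T.Adj x.1 y.1) :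
    lam' s(x, y) = (lam s(x.1, v) || lam s(v, y.1)) := by
  rw [hS.eq_newEdge h hxy, newEdge, hlam₂]
  rcases ((hS.adj_iff x y).1 h).resolve_left hxy with ⟨hx, hy⟩ | ⟨hx, hy⟩
  · rw [hx, hy, Sym2.eq_swap (a := a)]
  · rw [hx, hy, Sym2.eq_swap (a := b), Bool.or_comm]

include hlam₁ hlam₂ in
lemma any_edges_lift {x y : {u : V // u ≠ v}} (p : T'.Walk x y) :
    (hS.lift p).edges.any lam = p.edges.any lam' := by
  induction p with
  | nil => simp [lift]
  | @cons x w y h q ih =>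
    rw [lift]
    split_ifs with hxw
    · simp [ih, hlam₁ x w hxw]
    · simp [ih, hS.label_of_not_adj hlam₂ h hxw, Bool.or_assoc]

include hlam₁ hlam₂ in
lemma exists_isPath_label_iff (hT : T.IsAcyclic) (hT' : T'.Connected) (x y : {u : V // u ≠ v}) :
    (∃ p : T'.Walk x y, p.IsPath ∧ ∃ e ∈ p.edges, lam' e = true) ↔
      ∃ q : T.Walk x.1 y.1, q.IsPath ∧ ∃ e ∈ q.edges, lam e = true := by
  simp only [← List.any_eq_true]
  constructor
  · rintro ⟨p, hp, hl⟩
    exact ⟨hS.lift p, hS.isPath_lift hp, by rwa [hS.any_edges_lift hlam₁ hlam₂]⟩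
  · rintro ⟨q, hq, hl⟩
    obtain ⟨p, hp⟩ := (hT'.preconnected x y).exists_isPath
    have hpq : hS.lift p = q :=
      congrArg Subtype.val ((hT.subsingleton_path x.1 y.1).elim ⟨_, hS.isPath_lift hp⟩ ⟨q, hq⟩)
    exact ⟨p, hp, by rwa [← hS.any_edges_lift hlam₁ hlam₂, hpq]⟩

end Labels

lemma connected (hT : T.Connected) (hdeg : ∀ u : V, T.Adj v u → u = a ∨ u = b) :
    T'.Connected := by
  classical
  -- contract the edge `va`
  let f : V → {u : V // u ≠ v} := fun u => if h : u = v then ⟨a, hS.adj_left.ne'⟩ else ⟨u, h⟩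
  have hf : ∀ z : {u : V // u ≠ v}, f z.1 = z := fun z => dif_neg z.2
  have hfv : ∀ y, T.Adj v y → T'.Reachable (f v) (f y) := by
    intro y hy
    rcases hdeg y hy with rfl | rfl <;> simp only [f, dif_pos rfl, dif_neg hy.ne']
    · rfl
    · exact ((hS.adj_iff _ _).2 (Or.inr (Or.inl ⟨rfl, rfl⟩))).reachable
  have hf_adj : ∀ x y, T.Adj x y → T'.Reachable (f x) (f y) := by
    intro x y h
    by_cases hx : x = v
    · subst hx; exact hfv y h
    by_cases hy : y = v
    · subst hy; exact (hfv x h.symm).symm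
    simp only [f, dif_neg hx, dif_neg hy]
    exact ((hS.adj_iff _ _).2 (Or.inl h)).reachable
  refine (connected_iff _).2 ⟨fun x y => ?_, ⟨⟨a, hS.adj_left.ne'⟩⟩⟩
  rw [← hf x, ← hf y, reachable_iff_reflTransGen]
  refine Relation.ReflTransGen.lift' f (fun x y h => ?_) _ _
    ((reachable_iff_reflTransGen _ _).1 (hT.preconnected x.1 y.1))
  exact (reachable_iff_reflTransGen _ _).1 (hf_adj x y h)

lemma isAcyclic (hT : T.IsAcyclic) : T'.IsAcyclic :=
  isAcyclic_iff_subsingleton_path.2 fun x y => ⟨fun p q => Subtype.ext <| hS.lift_injective <|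
    congrArg Subtype.val ((hT.subsingleton_path x.1 y.1).elim
      ⟨_, hS.isPath_lift p.2⟩ ⟨_, hS.isPath_lift q.2⟩)⟩

lemma isLeaf_iff_of_eq_left (hT : T.IsAcyclic) {u : {u : V // u ≠ v}} (hu : u.1 = a) :
    T'.IsLeaf u ↔ T.IsLeaf u.1 := by
  have hub : T'.Adj u ⟨b, hS.adj_right.ne'⟩ := (hS.adj_iff _ _).2 (Or.inr (Or.inl ⟨hu, rfl⟩))
  have huv : T.Adj u.1 v := hu ▸ hS.adj_left.symm
  rw [isLeaf_iff_forall_adj_eq hub, isLeaf_iff_forall_adj_eq huv]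
  constructor
  · intro H z hz
    by_contra hzv
    have hzb : z = b := congrArg Subtype.val (H ⟨z, hzv⟩ ((hS.adj_iff _ _).2 (Or.inl hz)))
    exact hT.not_adj_of_adj_of_adj hS.adj_left hS.adj_right (hu ▸ hzb ▸ hz)
  · intro H z hz
    rcases (hS.adj_iff u z).1 hz with h | ⟨-, h⟩ | ⟨h, -⟩
    · exact absurd (H _ h) z.2
    · exact Subtype.ext h
    · exact absurd (hu.symm.trans h) hS.ne

lemma isLeaf_iff_of_ne (hdeg : ∀ u : V, T.Adj v u → u = a ∨ u = b) {u : {u : V // u ≠ v}}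
    (ha : u.1 ≠ a) (hb : u.1 ≠ b) : T'.IsLeaf u ↔ T.IsLeaf u.1 := by
  have hadj : ∀ z, T'.Adj u z ↔ T.Adj u.1 z.1 := fun z => by
    simp [hS.adj_iff, ha, hb]
  have hne : ∀ {w}, T.Adj u.1 w → w ≠ v := by
    rintro w h rfl
    exact (hdeg _ h.symm).elim ha hb
  exact Equiv.existsUnique_subtype_congr
    ((Equiv.subtypeEquivRight hadj).trans (Equiv.subtypeSubtypeEquivSubtype hne))

lemma isLeaf_iff (hT : T.IsAcyclic) (hdeg : ∀ u : V, T.Adj v u → u = a ∨ u = b)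
    (u : {u : V // u ≠ v}) : T'.IsLeaf u ↔ T.IsLeaf u.1 := by
  by_cases ha : u.1 = a
  · exact hS.isLeaf_iff_of_eq_left hT ha
  by_cases hb : u.1 = b
  · exact hS.symm.isLeaf_iff_of_eq_left hT hb
  exact hS.isLeaf_iff_of_ne hdeg ha hb

lemma isTree (hT : T.IsTree) (hdeg : ∀ u : V, T.Adj v u → u = a ∨ u = b) : T'.IsTree :=
  ⟨hS.connected hT.connected hdeg, hS.isAcyclic hT.isAcyclic⟩

end IsSuppression

theorem fitch_suppress_degree_two_general {V : Type*} (T : SimpleGraph V) (hT : T.IsTree)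
    (lam : Sym2 V → Bool) (v a b : V)
    (hva : T.Adj v a) (hvb : T.Adj v b)
    (hdeg : ∀ u : V, T.Adj v u → u = a ∨ u = b)
    (T' : SimpleGraph {u : V // u ≠ v})
    (hT' : ∀ x y : {u : V // u ≠ v},
      T'.Adj x y ↔ (T.Adj x.1 y.1 ∨ (x.1 = a ∧ y.1 = b) ∨ (x.1 = b ∧ y.1 = a)))
    (lam' : Sym2 {u : V // u ≠ v} → Bool)
    (hlam'₁ : ∀ x y : {u : V // u ≠ v}, T.Adj x.1 y.1 →
      lam' s(x, y) = lam s(x.1, y.1))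
    (hlam'₂ : ∀ (ha : a ≠ v) (hb : b ≠ v),
      lam' s(⟨a, ha⟩, ⟨b, hb⟩) = (lam s(v, a) || lam s(v, b))) :
    T'.IsTree ∧ (∀ u : {u : V // u ≠ v}, T'.IsLeaf u ↔ T.IsLeaf u.1) ∧
      ∀ (x y : {u : V // u ≠ v}) (hx : T'.IsLeaf x) (hy : T'.IsLeaf y)
        (hx' : T.IsLeaf x.1) (hy' : T.IsLeaf y.1),
        (fitchGraph T' lam').Adj ⟨x, hx⟩ ⟨y, hy⟩ ↔
          (fitchGraph T lam).Adj ⟨x.1, hx'⟩ ⟨y.1, hy'⟩ := by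
  have hS : IsSuppression T v a b T' := ⟨hT', hva, hvb⟩
  have hT'tree := hS.isTree hT hdeg
  refine ⟨hT'tree, hS.isLeaf_iff hT.isAcyclic hdeg, fun x y hx hy hx' hy' => ?_⟩
  exact and_congr (by simp [Subtype.ext_iff])
    (hS.exists_isPath_label_iff hlam'₁ hlam'₂ hT.isAcyclic hT'tree.connected x y)

/-- suppressing a degree-2 vertex does not change the Fitch graph.
Let `v` be a vertex of the tree `T` of degree exactly 2 with neighbours `a` and
`b`, let `T'` be obtained from `T` by deleting `v` (together with the edges
`{v,a}`, `{v,b}`) and adding the edge `{a,b}`, and let `lam'` agree with `lam`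
on the old edges while labelling the new edge `{a,b}` by `1` iff `{v,a}` or
`{v,b}` is labelled `1`.  Then `T'` is a tree with the same leaves as `T`, and
the Fitch graph explained by `(T', lam')` equals the one explained by
`(T, lam)`. -/
theorem fitch_suppress_degree_two {V : Type*} (T : SimpleGraph V) (hT : T.IsTree)
    (lam : Sym2 V → Bool) (v a b : V) (hab : a ≠ b)
    (hva : T.Adj v a) (hvb : T.Adj v b)
    (hdeg : ∀ u : V, T.Adj v u → u = a ∨ u = b)
    (T' : SimpleGraph {u : V // u ≠ v})
    (hT' : ∀ x y : {u : V // u ≠ v},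
      T'.Adj x y ↔ (T.Adj x.1 y.1 ∨ (x.1 = a ∧ y.1 = b) ∨ (x.1 = b ∧ y.1 = a)))
    (lam' : Sym2 {u : V // u ≠ v} → Bool)
    (hlam'₁ : ∀ x y : {u : V // u ≠ v}, T.Adj x.1 y.1 →
      lam' s(x, y) = lam s(x.1, y.1))
    (hlam'₂ : ∀ (ha : a ≠ v) (hb : b ≠ v),
      lam' s(⟨a, ha⟩, ⟨b, hb⟩) = (lam s(v, a) || lam s(v, b))) :
    T'.IsTree ∧ (∀ u : {u : V // u ≠ v}, T'.IsLeaf u ↔ T.IsLeaf u.1) ∧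
      ∀ (x y : {u : V // u ≠ v}) (hx : T'.IsLeaf x) (hy : T'.IsLeaf y)
        (hx' : T.IsLeaf x.1) (hy' : T.IsLeaf y.1),
        (fitchGraph T' lam').Adj ⟨x, hx⟩ ⟨y, hy⟩ ↔
          (fitchGraph T lam).Adj ⟨x.1, hx'⟩ ⟨y.1, hy'⟩ :=
  fitch_suppress_degree_two_general T hT lam v a b hva hvb hdeg T' hT' lam' hlam'₁ hlam'₂
end

section
/- Let k ≥ 2 and n_1, …, n_k ≥ 1 with n_i ≥ 2 for at least one i. Then every edge-labeled tree (T, λ) whose undirected Fitch graph is isomorphic to the complete multipartite graph K_{n_1,…,n_k} has at least (n_1 + ⋯ + n_k) + |{ i : n_i ≥ 2 }| vertices. -/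
open SimpleGraph

open SimpleGraph

/-!
Pick two leaves `aᵢ, bᵢ` in each part of size at least two, and let `wᵢ` be the neighbour of `aᵢ`.
Since `aᵢ bᵢ` is a non-edge of the Fitch graph, the tree path from `aᵢ` to `bᵢ`, which starts with
the edge `aᵢ wᵢ`, is labelled `0` throughout. Two leaves from different parts are adjacent, so
`wᵢ = wⱼ` with `i ≠ j` is impossible: the path `aᵢ wᵢ aⱼ` would carry only `0` labels.
Moreover `wᵢ` is not a leaf once the tree has a third leaf. Hence the `wᵢ` are pairwise
distinct inner vertices, which together with the leaves gives the bound.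
-/

namespace SimpleGraph

variable {V : Type*} {T : SimpleGraph V}

theorem IsLeaf.eq_of_adj {x u w : V} (hx : T.IsLeaf x) (hu : T.Adj x u) (hw : T.Adj x w) :
    u = w :=
  hx.unique hu hw

theorem Connected.card_le_two_of_adj_of_isLeaf [Finite V] (hT : T.Connected) {x w : V}
    (hx : T.IsLeaf x) (hw : T.IsLeaf w) (hxw : T.Adj x w) : Nat.card V ≤ 2 := by
  have closed : ∀ {u v}, T.Adj u v → u = x ∨ u = w → v = x ∨ v = w := by
    rintro u v huv (rfl | rfl)
    · exact .inr (hx.eq_of_adj huv hxw)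
    · exact .inl (hw.eq_of_adj huv hxw.symm)
  have mem : ∀ {u v} (p : T.Walk u v), u = x ∨ u = w → v = x ∨ v = w := by
    intro u v p
    induction p with
    | nil => exact id
    | cons h _ ih => exact fun hu => ih (closed h hu)
  have hsurj : Function.Surjective fun b : Bool => if b then x else w := fun v => by
    rcases mem (hT.preconnected x v).some (.inl rfl) with rfl | rfl
    exacts [⟨true, rfl⟩, ⟨false, rfl⟩]
  simpa using Nat.card_le_card_of_surjective _ hsurj

end SimpleGraph

namespace fitchGraph

variable {V : Type*} {T : SimpleGraph V} {lam : Sym2 V → Bool}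

theorem lam_eq_false_of_not_adj (hT : T.Preconnected) {x y : {v // T.IsLeaf v}} (hxy : x ≠ y)
    (h : ¬(fitchGraph T lam).Adj x y) {w : V} (hw : T.Adj x w) : lam s(x.1, w) = false := by
  classical
  obtain ⟨p, hp⟩ := (hT x y).some.toPath
  have hnil : ¬p.Nil := Walk.not_nil_of_ne fun h => hxy (Subtype.ext h)
  rw [← x.2.eq_of_adj (p.adj_snd hnil) hw, Bool.eq_false_iff]
  exact fun hl => h ⟨hxy, p, hp, _, p.mk_start_snd_mem_edges hnil, hl⟩

theorem lam_eq_true_of_adj_of_mem_commonNeighbors (hT : T.IsAcyclic)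
    {x y : {v // T.IsLeaf v}} (h : (fitchGraph T lam).Adj x y) {w : V}
    (hw : w ∈ T.commonNeighbors x y) : lam s(x.1, w) = true ∨ lam s(y.1, w) = true := by
  obtain ⟨hxy, p, hp, e, he, hl⟩ := h
  obtain ⟨hx, hy⟩ : T.Adj x w ∧ T.Adj y w := hw
  let q : T.Walk x y := .cons hx (.cons hy.symm .nil)
  have hq : q.IsPath := by
    refine (Walk.IsPath.nil.cons ?_).cons ?_
    · simpa using hy.ne.symm
    · simpa using ⟨hx.ne, fun h => hxy (Subtype.ext h)⟩
  have hpq : p = q := congrArg Subtype.val ((hT.subsingleton_path _ _).elim ⟨p, hp⟩ ⟨q, hq⟩)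
  subst hpq
  simp only [q, Walk.edges_cons, Walk.edges_nil, List.mem_cons, List.not_mem_nil, or_false] at he
  rcases he with rfl | rfl
  exacts [.inl hl, .inr (Sym2.eq_swap ▸ hl)]

theorem card_leaves_add_card_le_card [Finite V] (hT : T.IsTree) {ι : Type*}
    (a b : ι → {v // T.IsLeaf v}) (hab : ∀ i, a i ≠ b i)
    (hnadj : ∀ i, ¬(fitchGraph T lam).Adj (a i) (b i))
    (hadj : Pairwise fun i j => (fitchGraph T lam).Adj (a i) (a j))
    (hleaves : 2 < Nat.card {v // T.IsLeaf v}) :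
    Nat.card {v // T.IsLeaf v} + Nat.card ι ≤ Nat.card V := by
  choose w hw using fun i => (a i).2.exists
  have hlam (i : ι) : lam s((a i).1, w i) = false :=
    lam_eq_false_of_not_adj hT.connected.preconnected (hab i) (hnadj i) (hw i)
  have hinner (i : ι) : ¬T.IsLeaf (w i) := fun hwi =>
    hleaves.not_ge <| (Finite.card_subtype_le _).trans <|
      hT.connected.card_le_two_of_adj_of_isLeaf (a i).2 hwi (hw i)
  have hinj : Function.Injective w := by
    intro i j hij
    by_contra hne
    have hlam' : lam s((a j).1, w i) = false := hij ▸ hlam j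
    simpa [hlam i, hlam'] using
      lam_eq_true_of_adj_of_mem_commonNeighbors hT.isAcyclic (hadj hne) ⟨hw i, hij ▸ hw j⟩
  have : Finite ι := .of_injective w hinj
  rw [← Nat.card_sum]
  refine Nat.card_le_card_of_injective _ (Subtype.val_injective.sumElim hinj ?_)
  intro x i hxi
  exact hinner i (hxi ▸ x.2)

end fitchGraph

/-- for `k ≥ 2` and `n₁, …, n_k ≥ 1` with `n_i ≥ 2` for at least
one `i`, every edge-labelled tree `(T, lam)` whose Fitch graph is isomorphic to
the complete multipartite graph `K_{n₁,…,n_k}` has at least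
`(n₁ + ⋯ + n_k) + #{i : n_i ≥ 2}` vertices. -/
theorem min_tree_size_lower_bound (k : ℕ) (hk : 2 ≤ k) (n : Fin k → ℕ)
    (hn : ∀ i, 1 ≤ n i) (hn2 : ∃ i, 2 ≤ n i)
    {V : Type*} [Fintype V] (T : SimpleGraph V) (hT : T.IsTree)
    (lam : Sym2 V → Bool)
    (hiso : Nonempty (fitchGraph T lam ≃g
      completeMultipartiteGraph (fun i : Fin k => Fin (n i)))) :
    (∑ i, n i) + (Finset.univ.filter fun i : Fin k => 2 ≤ n i).card ≤
      Fintype.card V := by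
  obtain ⟨φ⟩ := hiso
  have adj_iff (x y) : (fitchGraph T lam).Adj (φ.symm x) (φ.symm y) ↔ x.1 ≠ y.1 := by
    rw [φ.symm.map_adj_iff]
    simp [completeMultipartiteGraph]
  have hleaves : Nat.card {v // T.IsLeaf v} = ∑ i, n i := by
    simp [Nat.card_congr φ.toEquiv]
  have htwo : 2 < ∑ i, n i := by
    obtain ⟨i, hi⟩ := hn2
    obtain ⟨j, hji⟩ := Fintype.exists_ne_of_one_lt_card (by simp; omega) i
    calc 2 < n i + n j := by linarith [hn j]
      _ = ∑ l ∈ {i, j}, n l := (Finset.sum_pair hji.symm).symm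
      _ ≤ ∑ l, n l := Finset.sum_le_sum_of_subset (Finset.subset_univ _)
  have := fitchGraph.card_leaves_add_card_le_card hT
    (fun i : {i // 2 ≤ n i} => φ.symm ⟨i, 0, by omega⟩) (fun i => φ.symm ⟨i, 1, i.2⟩)
    (fun i h => by simpa using φ.symm.injective h) (fun i => by simp [adj_iff])
    (fun i j hij => (adj_iff _ _).2 fun h => hij (Subtype.ext h)) (hleaves ▸ htwo)
  simpa [hleaves, Nat.card_eq_fintype_card, Fintype.card_subtype] using this
end

section
/- Let k ≥ 2 and n_1, …, n_k ≥ 1 with n_i ≥ 2 for at least one i. Then there exists an edge-labeled tree (T, λ) with exactly (n_1 + ⋯ + n_k) + |{ i : n_i ≥ 2 }| vertices whose undirected Fitch graph is isomorphic to the complete multipartite graph K_{n_1,…,n_k}; in particular, such a minimum tree is obtained from the tree T[n_1,…,n_k] (a root r with children c_1,…,c_k, where c_i is a leaf if n_i = 1 and has n_i leaf children if n_i ≥ 2; edges incident to r labeled 1, all other edges labeled 0) by contracting one edge between the root and a non-leaf child. -/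
open SimpleGraph

lemma tree_of_parent {V : Type*} [Nonempty V] (G : SimpleGraph V) (r : V) (par : V → V)
    (f : V → ℕ) (hrank : ∀ v, v ≠ r → f (par v) < f v)
    (hadj : ∀ u v, G.Adj u v ↔ (u ≠ r ∧ par u = v) ∨ (v ≠ r ∧ par v = u)) :
    G.IsTree := by
  classical
  have hreach : ∀ N v, f v ≤ N → G.Reachable v r := by
    intro N
    induction N with
    | zero =>
      intro v hv
      by_cases h : v = r
      · subst h; exact Reachable.refl _
      · exact absurd (hrank v h) (by omega)
    | succ N ih =>
      intro v hv
      by_cases h : v = r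
      · subst h; exact Reachable.refl _
      · have hadjv : G.Adj v (par v) := (hadj v (par v)).2 (Or.inl ⟨h, rfl⟩)
        exact (hadjv.reachable).trans (ih (par v) (by have := hrank v h; omega))
  have hreach : ∀ v, G.Reachable v r := fun v => hreach (f v) v le_rfl
  constructor
  · exact ⟨fun u v => (hreach u).trans (hreach v).symm⟩
  · intro v c hc
    obtain ⟨m, hm_mem, hm_max⟩ := Finset.exists_max_image c.support.toFinset f
      ⟨v, List.mem_toFinset.2 c.start_mem_support⟩
    rw [List.mem_toFinset] at hm_mem
    simp only [List.mem_toFinset] at hm_max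
    have hc' : (c.rotate m hm_mem).IsCycle := hc.rotate hm_mem
    have hmax' : ∀ a ∈ (c.rotate m hm_mem).support, f a ≤ f m := by
      intro a ha
      rcases List.eq_or_mem_of_mem_cons ((c.rotate m hm_mem).support_eq_cons ▸ ha) with h | h
      · exact h ▸ le_refl _
      · exact hm_max a (List.mem_of_mem_tail ((c.support_rotate m hm_mem).mem_iff.1 h))
    -- key: any neighbor of m is its parent
    have hpar : ∀ u, G.Adj m u → f u ≤ f m → m ≠ r ∧ par m = u := by
      intro u hu hle
      rcases (hadj m u).1 hu with h | h
      · exact h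
      · exact absurd (hrank u h.1 |>.trans_le (h.2 ▸ hle)) (lt_irrefl _)
    revert hc' hmax'
    generalize c.rotate m hm_mem = c'
    intro hc' hmax'
    cases c' with
    | nil => exact hc'.not_of_nil
    | @cons _ u _ h q =>
      have hu : f u ≤ f m := hmax' u (by simp)
      obtain ⟨hmr, hpu⟩ := hpar u h hu
      have hq2 : 2 ≤ q.length := by
        have := hc'.three_le_length
        simp only [Walk.length_cons] at this; omega
      have hnodup : q.support.Nodup := by
        have := hc'.2
        simpa using this
      have hum : u ≠ m := by
        intro he
        subst he
        -- q : Walk u u with support nodup, but length ≥ 2 hence u appears twice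
        cases q with
        | nil => simp at hq2
        | cons h' q' =>
          simp only [Walk.support_cons, List.nodup_cons] at hnodup
          exact hnodup.1 q'.end_mem_support
      obtain ⟨w, h', t, hqr⟩ := Walk.exists_eq_cons_of_ne hum.symm q.reverse
      have hw : f w ≤ f m := by
        have : w ∈ q.support := by
          have : w ∈ q.reverse.support := by rw [hqr]; simp
          simpa using this
        exact hmax' w (by simp [this])
      have hwu : w = u := (hpar w h' hw).2.symm.trans hpu
      subst hwu
      have htlen : 1 ≤ t.length := by
        have : q.reverse.length = q.length := q.length_reverse
        rw [hqr] at this; simp only [Walk.length_cons] at this; omega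
      have : t.support.Nodup := by
        have h1 : q.reverse.support.Nodup := by simpa using hnodup
        rw [hqr] at h1
        simp only [Walk.support_cons, List.nodup_cons] at h1
        exact h1.2
      cases t with
      | nil => simp at htlen
      | cons h'' t' =>
        simp only [Walk.support_cons, List.nodup_cons] at this
        exact this.1 t'.end_mem_support

section FitchAux

variable {k : ℕ} (n : Fin k → ℕ) (i₀ : Fin k)

abbrev FV : Type := Option ((Σ i : Fin k, Fin (n i)) ⊕ {i : Fin k // i ≠ i₀ ∧ 2 ≤ n i})

def fleaf (i : Fin k) (a : Fin (n i)) : FV n i₀ := some (Sum.inl ⟨i, a⟩)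

def fpar : FV n i₀ → FV n i₀
  | none => none
  | some (Sum.inr _) => none
  | some (Sum.inl ⟨i, _⟩) => if h : i ≠ i₀ ∧ 2 ≤ n i then some (Sum.inr ⟨i, h⟩) else none

def frank : FV n i₀ → ℕ
  | none => 0
  | some (Sum.inr _) => 1
  | some (Sum.inl _) => 2

def fT : SimpleGraph (FV n i₀) :=
  SimpleGraph.fromRel fun u v => u ≠ none ∧ fpar n i₀ u = v

lemma frank_par : ∀ v : FV n i₀, v ≠ none → frank n i₀ (fpar n i₀ v) < frank n i₀ v := by
  rintro (_ | (⟨i, a⟩ | j)) h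
  · exact absurd rfl h
  · by_cases hc : i ≠ i₀ ∧ 2 ≤ n i <;> simp [fpar, frank, hc]
  · simp [fpar, frank]

lemma fT_adj (u v : FV n i₀) :
    (fT n i₀).Adj u v ↔ (u ≠ none ∧ fpar n i₀ u = v) ∨ (v ≠ none ∧ fpar n i₀ v = u) := by
  rw [fT, fromRel_adj]
  constructor
  · rintro ⟨-, h⟩; exact h
  · intro h
    refine ⟨?_, h⟩
    rintro rfl
    rcases h with ⟨h1, h2⟩ | ⟨h1, h2⟩ <;>
      exact absurd (h2 ▸ frank_par n i₀ u h1) (lt_irrefl _)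

lemma fT_isTree : (fT n i₀).IsTree :=
  tree_of_parent _ none (fpar n i₀) (frank n i₀) (frank_par n i₀) (fT_adj n i₀)

lemma fpar_ne_leaf (u : FV n i₀) (s : Σ i, Fin (n i)) : fpar n i₀ u ≠ some (Sum.inl s) := by
  classical
  rcases u with _ | (⟨i, a⟩ | j)
  · simp [fpar]
  · by_cases h : i ≠ i₀ ∧ 2 ≤ n i <;> simp [fpar, h]
  · simp [fpar]

lemma adj_par {v : FV n i₀} (h : v ≠ none) : (fT n i₀).Adj v (fpar n i₀ v) :=
  (fT_adj n i₀ _ _).2 (Or.inl ⟨h, rfl⟩)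

lemma isLeaf_leaf (i : Fin k) (a : Fin (n i)) : (fT n i₀).IsLeaf (fleaf n i₀ i a) := by
  refine ⟨fpar n i₀ (fleaf n i₀ i a), adj_par n i₀ (by simp [fleaf]), ?_⟩
  intro u hu
  rcases (fT_adj n i₀ _ _).1 hu with ⟨-, h⟩ | ⟨h1, h2⟩
  · exact h.symm
  · exact absurd h2 (fpar_ne_leaf n i₀ u _)

lemma isLeaf_iff (h2 : 2 ≤ n i₀) (v : FV n i₀) :
    (fT n i₀).IsLeaf v ↔ ∃ i a, v = fleaf n i₀ i a := by
  constructor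
  · rintro ⟨u, hu, huniq⟩
    rcases v with _ | (⟨i, a⟩ | ⟨j, hj⟩)
    · exfalso
      have ha0 : (fT n i₀).Adj none (fleaf n i₀ i₀ ⟨0, by omega⟩) :=
        (fT_adj n i₀ _ _).2 (Or.inr ⟨by simp [fleaf], by simp [fleaf, fpar]⟩)
      have ha1 : (fT n i₀).Adj none (fleaf n i₀ i₀ ⟨1, by omega⟩) :=
        (fT_adj n i₀ _ _).2 (Or.inr ⟨by simp [fleaf], by simp [fleaf, fpar]⟩)
      have := (huniq _ ha0).trans (huniq _ ha1).symm
      simp [fleaf] at this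
    · exact ⟨i, a, rfl⟩
    · exfalso
      have ha0 : (fT n i₀).Adj (some (Sum.inr ⟨j, hj⟩)) none :=
        (fT_adj n i₀ _ _).2 (Or.inl ⟨by simp, rfl⟩)
      have ha1 : (fT n i₀).Adj (some (Sum.inr ⟨j, hj⟩)) (fleaf n i₀ j ⟨0, by omega⟩) :=
        (fT_adj n i₀ _ _).2 (Or.inr ⟨by simp [fleaf], by simp [fleaf, fpar, dif_pos hj]⟩)
      have := (huniq _ ha0).trans (huniq _ ha1).symm
      simp [fleaf] at this
  · rintro ⟨i, a, rfl⟩; exact isLeaf_leaf n i₀ i a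

def flab : FV n i₀ → FV n i₀ → Bool
  | none, some (Sum.inr _) => true
  | some (Sum.inr _), none => true
  | none, some (Sum.inl ⟨i, _⟩) => decide ¬(i = i₀)
  | some (Sum.inl ⟨i, _⟩), none => decide ¬(i = i₀)
  | _, _ => false

lemma flab_symm : ∀ u v, flab n i₀ u v = flab n i₀ v u := by
  rintro (_ | (⟨i, a⟩ | j)) (_ | (⟨i', a'⟩ | j')) <;> rfl

def flam : Sym2 (FV n i₀) → Bool := Sym2.lift ⟨flab n i₀, flab_symm n i₀⟩

@[simp] lemma flam_mk (u v : FV n i₀) : flam n i₀ s(u, v) = flab n i₀ u v := rfl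

lemma adj_leaf_inr {i : Fin k} (h : i ≠ i₀ ∧ 2 ≤ n i) (a : Fin (n i)) :
    (fT n i₀).Adj (fleaf n i₀ i a) (some (Sum.inr ⟨i, h⟩)) :=
  (fT_adj n i₀ _ _).2 (Or.inl ⟨by simp [fleaf], by simp [fleaf, fpar, dif_pos h]⟩)

lemma adj_inr_root (j : {i : Fin k // i ≠ i₀ ∧ 2 ≤ n i}) :
    (fT n i₀).Adj (some (Sum.inr j)) none :=
  (fT_adj n i₀ _ _).2 (Or.inl ⟨by simp, rfl⟩)

lemma adj_leaf_root {i : Fin k} (h : ¬(i ≠ i₀ ∧ 2 ≤ n i)) (a : Fin (n i)) :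
    (fT n i₀).Adj (fleaf n i₀ i a) none :=
  (fT_adj n i₀ _ _).2 (Or.inl ⟨by simp [fleaf], by simp [fleaf, fpar, dif_neg h]⟩)

def chain (i : Fin k) (a : Fin (n i)) : (fT n i₀).Walk (fleaf n i₀ i a) none :=
  if h : i ≠ i₀ ∧ 2 ≤ n i then
    Walk.cons (adj_leaf_inr n i₀ h a) (Walk.cons (adj_inr_root n i₀ ⟨i, h⟩) Walk.nil)
  else
    Walk.cons (adj_leaf_root n i₀ h a) Walk.nil

lemma chain_label {i : Fin k} (a : Fin (n i)) (hi : i ≠ i₀) :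
    ∃ e ∈ (chain n i₀ i a).edges, flam n i₀ e = true := by
  by_cases h : i ≠ i₀ ∧ 2 ≤ n i
  · exact ⟨s(some (Sum.inr ⟨i, h⟩), none), by simp [chain, h], rfl⟩
  · refine ⟨s(fleaf n i₀ i a, none), by simp [chain, h], ?_⟩
    simp [fleaf, flab, hi]

lemma append_chains_isPath {i j : Fin k} (a : Fin (n i)) (b : Fin (n j)) (hij : i ≠ j) :
    ((chain n i₀ i a).append (chain n i₀ j b).reverse).IsPath := by
  by_cases h1 : i ≠ i₀ ∧ 2 ≤ n i <;> by_cases h2 : j ≠ i₀ ∧ 2 ≤ n j <;>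
    simp [chain, h1, h2, Walk.isPath_def, Walk.support_append, Walk.support_cons,
      Walk.support_nil] <;>
    simp [fleaf, Subtype.ext_iff, Sigma.ext_iff, hij, Ne.symm hij]

lemma same_class_no_label {i : Fin k} {a b : Fin (n i)} (hab : a ≠ b)
    (p : (fT n i₀).Walk (fleaf n i₀ i a) (fleaf n i₀ i b)) (hp : p.IsPath) :
    ∀ e ∈ p.edges, flam n i₀ e = false := by
  have hni : 2 ≤ n i := by
    rcases a with ⟨a, ha⟩; rcases b with ⟨b, hb⟩
    have : a ≠ b := by simpa using hab
    omega
  obtain ⟨q₀, -, huniq⟩ := (fT_isTree n i₀).existsUnique_path (fleaf n i₀ i a) (fleaf n i₀ i b)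
  by_cases h : i ≠ i₀ ∧ 2 ≤ n i
  · have hadj1 := adj_leaf_inr n i₀ h a
    have hadj2 := (adj_leaf_inr n i₀ h b).symm
    have hqpath : (Walk.cons hadj1 (Walk.cons hadj2 Walk.nil)).IsPath := by
      simp only [Walk.isPath_def, Walk.support_cons, Walk.support_nil]
      simp [Walk.isPath_def, fleaf, Sigma.ext_iff, hab]
    have hpq : p = Walk.cons hadj1 (Walk.cons hadj2 Walk.nil) :=
      (huniq p hp).trans (huniq _ hqpath).symm
    rw [hpq]
    intro e he
    simp only [Walk.edges_cons, Walk.edges_nil, List.mem_cons, List.not_mem_nil, or_false] at he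
    rcases he with rfl | rfl <;> simp [fleaf, flab]
  · have hi : i = i₀ := by tauto
    have hadj1 := adj_leaf_root n i₀ h a
    have hadj2 := (adj_leaf_root n i₀ h b).symm
    have hqpath : (Walk.cons hadj1 (Walk.cons hadj2 Walk.nil)).IsPath := by
      simp only [Walk.isPath_def, Walk.support_cons, Walk.support_nil]
      simp [Walk.isPath_def, fleaf, Sigma.ext_iff, hab]
    have hpq : p = Walk.cons hadj1 (Walk.cons hadj2 Walk.nil) :=
      (huniq p hp).trans (huniq _ hqpath).symm
    rw [hpq]
    intro e he
    simp only [Walk.edges_cons, Walk.edges_nil, List.mem_cons, List.not_mem_nil, or_false] at he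
    rcases he with rfl | rfl <;> simp [fleaf, flab, hi]

end FitchAux

/-- for `k ≥ 2` and `n₁, …, n_k ≥ 1` with `n_i ≥ 2` for at least
one `i`, there is an edge-labelled tree with exactly
`(n₁ + ⋯ + n_k) + #{i : n_i ≥ 2}` vertices whose Fitch graph is isomorphic to
the complete multipartite graph `K_{n₁,…,n_k}`. -/
theorem min_tree_size_achieved (k : ℕ) (hk : 2 ≤ k) (n : Fin k → ℕ)
    (hn : ∀ i, 1 ≤ n i) (hn2 : ∃ i, 2 ≤ n i) :
    ∃ (V : Type) (_ : Fintype V) (T : SimpleGraph V) (lam : Sym2 V → Bool),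
      T.IsTree ∧
      Fintype.card V =
        (∑ i, n i) + (Finset.univ.filter fun i : Fin k => 2 ≤ n i).card ∧
      Nonempty (fitchGraph T lam ≃g
        completeMultipartiteGraph (fun i : Fin k => Fin (n i))) := by
  classical
  obtain ⟨i₀, hi₀⟩ := hn2
  refine ⟨FV n i₀, inferInstance, fT n i₀, flam n i₀, fT_isTree n i₀, ?_, ?_⟩
  · have hfilter : (Finset.univ.filter fun i : Fin k => i ≠ i₀ ∧ 2 ≤ n i)
        = (Finset.univ.filter fun i : Fin k => 2 ≤ n i).erase i₀ := by
      ext x; simp [and_comm]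
    have hmem : i₀ ∈ Finset.univ.filter fun i : Fin k => 2 ≤ n i := by simp [hi₀]
    have hcard1 : Fintype.card {i : Fin k // i ≠ i₀ ∧ 2 ≤ n i}
        = (Finset.univ.filter fun i : Fin k => 2 ≤ n i).card - 1 := by
      rw [Fintype.card_subtype, hfilter, Finset.card_erase_of_mem hmem]
    have hpos : 1 ≤ (Finset.univ.filter fun i : Fin k => 2 ≤ n i).card :=
      Finset.card_pos.2 ⟨i₀, hmem⟩
    simp only [FV, Fintype.card_option, Fintype.card_sum, Fintype.card_sigma,
      Fintype.card_fin, hcard1]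
    omega
  · have hbij : Function.Bijective (fun s : Σ i : Fin k, Fin (n i) =>
        (⟨fleaf n i₀ s.1 s.2, isLeaf_leaf n i₀ s.1 s.2⟩ :
          {v : FV n i₀ // (fT n i₀).IsLeaf v})) := by
      constructor
      · intro s t hst
        rcases s with ⟨i, a⟩; rcases t with ⟨j, b⟩
        simpa [fleaf, Subtype.ext_iff] using hst
      · rintro ⟨v, hv⟩
        obtain ⟨i, a, rfl⟩ := (isLeaf_iff n i₀ hi₀ v).1 hv
        exact ⟨⟨i, a⟩, rfl⟩
    refine ⟨SimpleGraph.Iso.symm ⟨Equiv.ofBijective _ hbij, ?_⟩⟩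
    rintro ⟨i, a⟩ ⟨j, b⟩
    show (fitchGraph (fT n i₀) (flam n i₀)).Adj
      ⟨fleaf n i₀ i a, isLeaf_leaf n i₀ i a⟩ ⟨fleaf n i₀ j b, isLeaf_leaf n i₀ j b⟩ ↔ _
    constructor
    · rintro ⟨hne, p, hp, e, he, hl⟩
      simp only [completeMultipartiteGraph, comap_adj, top_adj]
      intro hij
      subst hij
      have hab : a ≠ b := by
        rintro rfl; exact hne rfl
      rw [same_class_no_label n i₀ hab p hp e he] at hl
      simp at hl
    · intro h
      have hij : i ≠ j := by simpa [completeMultipartiteGraph] using h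
      refine ⟨?_, (chain n i₀ i a).append (chain n i₀ j b).reverse,
        append_chains_isPath n i₀ a b hij, ?_⟩
      · simp [Subtype.ext_iff, fleaf, Sigma.ext_iff, hij]
      · rcases ne_or_eq i i₀ with hi | hi
        · obtain ⟨e, he, hl⟩ := chain_label n i₀ a hi
          exact ⟨e, by rw [Walk.edges_append]; exact List.mem_append_left _ he, hl⟩
        · have hj : j ≠ i₀ := by rw [← hi]; exact hij.symm
          obtain ⟨e, he, hl⟩ := chain_label n i₀ b hj
          refine ⟨e, ?_, hl⟩
          rw [Walk.edges_append]
          exact List.mem_append_right _ (by rw [Walk.edges_reverse]; exact List.mem_reverse.2 he)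
end

section
/- For k ≥ 2 and n_1, …, n_k ≥ 1, the edge-labeled tree (T[n_1,…,n_k], λ*) explains the complete multipartite graph K_{n_1,…,n_k}: its leaf set is partitioned into sets L_1, …, L_k with |L_i| = n_i such that two distinct leaves are adjacent in the Fitch graph explained by (T[n_1,…,n_k], λ*) if and only if they lie in different sets L_i, L_j. -/
open SimpleGraph

/-- The vertex type of the tree `T[n₁,…,n_k]`: `none` is the root `r`,
`some ⟨i, none⟩` is the child `c_i` of the root, and `some ⟨i, some j⟩` is the
`j`-th leaf child of `c_i` (which exists only when `n_i ≥ 2`; when `n_i = 1`,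
the vertex `c_i` itself is a leaf). -/
abbrev FitchTreeVert (k : ℕ) (n : Fin k → ℕ) : Type :=
  Option (Σ i : Fin k, Option (Fin (if 2 ≤ n i then n i else 0)))

/-- The tree `T[n₁,…,n_k]`: the root is adjacent to each `c_i`, and `c_i` is
adjacent to each of its leaf children. -/
def fitchTree (k : ℕ) (n : Fin k → ℕ) : SimpleGraph (FitchTreeVert k n) :=
  SimpleGraph.fromRel fun x y =>
    (x = none ∧ ∃ i, y = some ⟨i, none⟩) ∨
    (∃ i j, x = some ⟨i, none⟩ ∧ y = some ⟨i, some j⟩)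

/-- The labelling `λ*`: an edge is labelled `1` iff it is incident to the root. -/
def lamStar (k : ℕ) (n : Fin k → ℕ) : Sym2 (FitchTreeVert k n) → Bool :=
  fun e => decide ((none : FitchTreeVert k n) ∈ e)

/-! The part `L_i` consists of the leaves below the child `c_i` of the root. The only edge leaving
the branch of `c_i` is `{c_i, r}`, so a path between two vertices of one branch cannot visit the
root `r` (it would pass through `c_i` twice) and has no edge labelled 1, while a path between two
different branches has to leave the first one through the edge `{c_i, r}`, which is labelled 1. -/

namespace SimpleGraph.Walk

variable {V : Type*} {G : SimpleGraph V} {S : Set V} {c : V}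

theorem mem_support_of_unique_exit (hexit : ∀ ⦃s t⦄, G.Adj s t → s ∈ S → t ∉ S → s = c)
    {a b : V} (p : G.Walk a b) (ha : a ∈ S) (hb : b ∉ S) : c ∈ S ∧ c ∈ p.support := by
  obtain ⟨d, hd, hs, ht⟩ := p.exists_boundary_dart S ha hb
  obtain rfl := hexit d.adj hs ht
  exact ⟨hs, p.dart_fst_mem_support_of_mem_darts hd⟩

theorem IsPath.support_subset_of_unique_exit
    (hexit : ∀ ⦃s t⦄, G.Adj s t → s ∈ S → t ∉ S → s = c)
    {a b : V} {p : G.Walk a b} (hp : p.IsPath) (ha : a ∈ S) (hb : b ∈ S) :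
    ∀ v ∈ p.support, v ∈ S := by
  intro v hv
  by_contra hvS
  obtain ⟨q, r, -, -, rfl⟩ := hp.mem_support_iff_exists_append.mp hv
  obtain ⟨hcS, hq⟩ := mem_support_of_unique_exit hexit q ha hvS
  have hr : c ∈ r.support := by
    simpa using (mem_support_of_unique_exit hexit r.reverse hb hvS).2
  exact hp.ne_of_mem_support_of_append (ne_of_mem_of_not_mem hcS hvS) hq hr rfl

end SimpleGraph.Walk

section FitchTree

variable {k : ℕ} {n : Fin k → ℕ}

def fitchBranch (i : Fin k) : Set (FitchTreeVert k n) := {v | ∃ o, v = some ⟨i, o⟩}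

lemma fitchBranch_disjoint {i j : Fin k} (hij : i ≠ j) :
    Disjoint (fitchBranch (n := n) i) (fitchBranch j) := by
  rw [Set.disjoint_left]
  rintro _ ⟨o, rfl⟩ ⟨o', h⟩
  simp_all

lemma fitchTree_adj_root_child (i : Fin k) : (fitchTree k n).Adj none (some ⟨i, none⟩) := by
  simp [fitchTree]

lemma fitchTree_adj_child_grandchild (i : Fin k) (j : Fin (if 2 ≤ n i then n i else 0)) :
    (fitchTree k n).Adj (some ⟨i, none⟩) (some ⟨i, some j⟩) := by
  simp [fitchTree]

lemma fitchTree_adj_root_iff {i : Fin k} {o : Option (Fin (if 2 ≤ n i then n i else 0))} :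
    (fitchTree k n).Adj (some ⟨i, o⟩) none ↔ o = none := by
  simp [fitchTree, eq_comm]

lemma fitchTree_not_adj_of_ne {i i' : Fin k} (h : i ≠ i')
    (o : Option (Fin (if 2 ≤ n i then n i else 0)))
    (o' : Option (Fin (if 2 ≤ n i' then n i' else 0))) :
    ¬ (fitchTree k n).Adj (some ⟨i, o⟩) (some ⟨i', o'⟩) := by
  simp [fitchTree, h, Ne.symm h]

lemma fitchTree_adj_same_iff {i : Fin k} {o o' : Option (Fin (if 2 ≤ n i then n i else 0))} :
    (fitchTree k n).Adj (some ⟨i, o⟩) (some ⟨i, o'⟩) ↔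
      (o = none ∧ o'.isSome) ∨ (o.isSome ∧ o' = none) := by
  rcases o with _ | j <;> rcases o' with _ | j' <;> simp [fitchTree]

lemma fitchTree_adj_exit_fitchBranch {i : Fin k} {s t : FitchTreeVert k n}
    (h : (fitchTree k n).Adj s t) (hs : s ∈ fitchBranch i) (ht : t ∉ fitchBranch i) :
    s = some ⟨i, none⟩ ∧ t = none := by
  obtain ⟨o, rfl⟩ := hs
  rcases t with _ | ⟨i', o'⟩
  · exact ⟨by rw [fitchTree_adj_root_iff.mp h], rfl⟩
  · obtain rfl : i = i' := by_contra fun hi => fitchTree_not_adj_of_ne hi o o' h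
    exact absurd ⟨o', rfl⟩ ht

lemma fitchTree_reachable_root (v : FitchTreeVert k n) : (fitchTree k n).Reachable none v := by
  rcases v with _ | ⟨i, _ | j⟩
  · rfl
  · exact (fitchTree_adj_root_child i).reachable
  · exact (fitchTree_adj_root_child i).reachable.trans
      (fitchTree_adj_child_grandchild i j).reachable

lemma fitchTree_preconnected : (fitchTree k n).Preconnected := fun u v =>
  (fitchTree_reachable_root u).symm.trans (fitchTree_reachable_root v)

lemma fitchTree_not_isLeaf_root (hk : 2 ≤ k) : ¬ (fitchTree k n).IsLeaf none := by
  rintro ⟨u, -, hu⟩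
  have h0 := hu _ (fitchTree_adj_root_child ⟨0, by omega⟩)
  have h1 := hu _ (fitchTree_adj_root_child ⟨1, by omega⟩)
  simp [← h0, Fin.ext_iff] at h1

lemma fitchTree_isLeaf_grandchild (i : Fin k) (j : Fin (if 2 ≤ n i then n i else 0)) :
    (fitchTree k n).IsLeaf (some ⟨i, some j⟩) := by
  refine ⟨some ⟨i, none⟩, (fitchTree_adj_child_grandchild i j).symm, fun u hu => ?_⟩
  rcases u with _ | ⟨i', o'⟩
  · simp [fitchTree_adj_root_iff] at hu
  · obtain rfl : i = i' := by_contra fun hi => fitchTree_not_adj_of_ne hi _ o' hu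
    simpa [fitchTree_adj_same_iff] using hu

lemma fitchTree_isLeaf_child_iff (i : Fin k) :
    (fitchTree k n).IsLeaf (some ⟨i, none⟩) ↔ n i < 2 := by
  constructor
  · rintro ⟨u, -, hu⟩
    by_contra! hi
    have h0 := hu _ (fitchTree_adj_root_child i).symm
    have h1 := hu _ (fitchTree_adj_child_grandchild i ⟨0, by rw [if_pos hi]; omega⟩)
    simp [← h0] at h1
  · intro hi
    refine ⟨none, (fitchTree_adj_root_child i).symm, fun u hu => ?_⟩
    rcases u with _ | ⟨i', o'⟩
    · rfl
    · obtain rfl : i = i' := by_contra fun hi => fitchTree_not_adj_of_ne hi _ o' hu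
      rcases o' with _ | j
      · simp at hu
      · exact (Fin.cast (if_neg (by omega)) j).elim0

lemma exists_mem_fitchBranch_of_isLeaf (hk : 2 ≤ k) {v : FitchTreeVert k n}
    (hv : (fitchTree k n).IsLeaf v) : ∃ i, v ∈ fitchBranch i := by
  rcases v with _ | ⟨i, o⟩
  · exact absurd hv (fitchTree_not_isLeaf_root hk)
  · exact ⟨i, o, rfl⟩

lemma ncard_isLeaf_mem_fitchBranch {i : Fin k} (hi : 1 ≤ n i) :
    {v : {v // (fitchTree k n).IsLeaf v} | v.1 ∈ fitchBranch i}.ncard = n i := by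
  by_cases h2 : 2 ≤ n i
  · have hrange : {v : {v // (fitchTree k n).IsLeaf v} | v.1 ∈ fitchBranch i} =
        Set.range fun j => ⟨some ⟨i, some j⟩, fitchTree_isLeaf_grandchild i j⟩ := by
      ext ⟨v, hv⟩
      constructor
      · rintro ⟨_ | j, rfl⟩
        · exact absurd ((fitchTree_isLeaf_child_iff i).mp hv) (by omega)
        · exact ⟨j, rfl⟩
      · rintro ⟨j, hj⟩
        exact ⟨some j, (congrArg Subtype.val hj).symm⟩
    rw [hrange, Set.ncard_range_of_injective (fun j j' h => by simpa using h)]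
    simp [h2]
  · have hsingle : {v : {v // (fitchTree k n).IsLeaf v} | v.1 ∈ fitchBranch i} =
        {⟨some ⟨i, none⟩, (fitchTree_isLeaf_child_iff i).mpr (by omega)⟩} := by
      ext ⟨v, hv⟩
      constructor
      · rintro ⟨_ | j, rfl⟩
        · rfl
        · exact (Fin.cast (if_neg h2) j).elim0
      · rintro ⟨⟩
        exact ⟨none, rfl⟩
    rw [hsingle, Set.ncard_singleton]
    omega

lemma not_fitchGraph_adj_of_mem_fitchBranch {i : Fin k} {x y : {v // (fitchTree k n).IsLeaf v}}
    (hx : x.1 ∈ fitchBranch i) (hy : y.1 ∈ fitchBranch i) :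
    ¬ (fitchGraph (fitchTree k n) (lamStar k n)).Adj x y := by
  rintro ⟨-, p, hp, e, he, hlabel⟩
  have hsupp := hp.support_subset_of_unique_exit
    (fun _ _ h hs ht => (fitchTree_adj_exit_fitchBranch h hs ht).1) hx hy
  have hroot : none ∈ fitchBranch (n := n) i :=
    hsupp _ (p.mem_support_of_mem_edges he (by simpa [lamStar] using hlabel))
  obtain ⟨_, ⟨⟩⟩ := hroot

lemma fitchGraph_adj_of_mem_fitchBranch_of_ne {i j : Fin k} (hij : i ≠ j)
    {x y : {v // (fitchTree k n).IsLeaf v}} (hx : x.1 ∈ fitchBranch i) (hy : y.1 ∈ fitchBranch j) :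
    (fitchGraph (fitchTree k n) (lamStar k n)).Adj x y := by
  have hy' : y.1 ∉ fitchBranch i := Set.disjoint_right.mp (fitchBranch_disjoint hij) hy
  refine ⟨fun h => hy' (h ▸ hx), ?_⟩
  obtain ⟨p, hp⟩ := fitchTree_preconnected x.1 y.1 |>.exists_isPath
  obtain ⟨d, hd, hs, ht⟩ := p.exists_boundary_dart _ hx hy'
  have hroot : d.snd = none := (fitchTree_adj_exit_fitchBranch d.adj hs ht).2
  refine ⟨p, hp, d.edge, List.mem_map_of_mem hd, ?_⟩
  simp [lamStar, Dart.edge, ← hroot]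

end FitchTree

/-- for `k ≥ 2` and `n₁, …, n_k ≥ 1`, the edge-labelled tree
`(T[n₁,…,n_k], λ*)` explains the complete multipartite graph `K_{n₁,…,n_k}`:
its leaf set can be partitioned into sets `L₁, …, L_k` with `|L_i| = n_i` such
that two leaves are adjacent in the explained Fitch graph iff they lie in
different parts. -/
theorem fitchTree_explains_completeMultipartite (k : ℕ) (hk : 2 ≤ k)
    (n : Fin k → ℕ) (hn : ∀ i, 1 ≤ n i) :
    ∃ L : Fin k → Set {v : FitchTreeVert k n // (fitchTree k n).IsLeaf v},
      (Pairwise fun i j => Disjoint (L i) (L j)) ∧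
      (⋃ i, L i) = Set.univ ∧
      (∀ i, (L i).ncard = n i) ∧
      ∀ x y, (fitchGraph (fitchTree k n) (lamStar k n)).Adj x y ↔
        ∃ i j, i ≠ j ∧ x ∈ L i ∧ y ∈ L j := by
  refine ⟨fun i => Subtype.val ⁻¹' fitchBranch i,
    fun i j hij => (fitchBranch_disjoint hij).preimage _,
    Set.eq_univ_of_forall fun v => Set.mem_iUnion.2 (exists_mem_fitchBranch_of_isLeaf hk v.2),
    fun i => ncard_isLeaf_mem_fitchBranch (hn i), fun x y => ⟨fun hxy => ?_, ?_⟩⟩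
  · obtain ⟨i, hx⟩ := exists_mem_fitchBranch_of_isLeaf hk x.2
    obtain ⟨j, hy⟩ := exists_mem_fitchBranch_of_isLeaf hk y.2
    exact ⟨i, j, fun hij => not_fitchGraph_adj_of_mem_fitchBranch hx (hij ▸ hy) hxy, hx, hy⟩
  · rintro ⟨i, j, hij, hx, hy⟩
    exact fitchGraph_adj_of_mem_fitchBranch_of_ne hij hx hy
end
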